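/- arXiv:1406.2115 — 2 statements merged into one kernel-verified Lean document; each statement's English description precedes it below -/
import Mathlib

section
/- Let Y = (Y¹,…,Yᵐ) be an exchangeable random vector in ℝᵐ and μ a probability measure on ℝ, all with finite p-th moments, p ≥ 1. Suppose m = k·n for positive integers k, n. Then (1/2^{p−1})·E[W_p^p(μ̂_Y, μ)] ≤ W_p^p(Law(Y¹,…,Yⁿ), μ^{⊗n}) + ε_{n,p}(μ), where μ̂_Y = (1/m)∑ⱼ δ_{Yʲ} is the empirical measure of Y, Law(Y¹,…,Yⁿ) is the joint law of the first n components, and ε_{n,p}(μ) = E[W_p^p((1/n)∑ᵢ δ_{Zⁱ}, μ)] with Z¹,…,Zⁿ i.i.d. with law μ. -/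
/-!
Cut `Y` into `k` blocks of `n` coordinates. The empirical measure of `Y` is the average of the
`k` block empirical measures, and averaging couplings shows that `W_p^p(·, μ)` is convex under
such averages; by exchangeability every block has the law of the first one, so
`E[W_p^p(μ̂_Y, μ)]` is at most the expectation of `W_p^p(μ̂_y, μ)` under the law of the first
block. For a single block, the triangle inequality for `W_p` (proved by gluing two couplings
along the disintegration of their common marginal) and `(a + b)^p ≤ 2^{p-1}(a^p + b^p)` give
`W_p^p(μ̂_y, μ) ≤ 2^{p-1}(d_{n,p}(y, z)^p + W_p^p(μ̂_z, μ))`; integrating this against any coupling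
of the block law with `μ^{⊗n}` and optimising over couplings finishes the proof.
-/

open MeasureTheory ENNReal

/-- `W_p^p` on `P(ℝ)` with cost `|x-y|^p`: infimum over couplings. -/
noncomputable def WppR (p : ℝ) (μ ν : Measure ℝ) : ℝ≥0∞ :=
  ⨅ (π : Measure (ℝ × ℝ)) (_ : π.map Prod.fst = μ ∧ π.map Prod.snd = ν),
    ∫⁻ z, ENNReal.ofReal (|z.1 - z.2| ^ p) ∂π

/-- `W_p^p` on `P(ℝⁿ)` with respect to the normalized cost
`d_{n,p}(x,y)^p = (1/n)∑ᵢ |xⁱ-yⁱ|^p`. -/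
noncomputable def WppVec (p : ℝ) (n : ℕ) (μ ν : Measure (Fin n → ℝ)) : ℝ≥0∞ :=
  ⨅ (π : Measure ((Fin n → ℝ) × (Fin n → ℝ)))
    (_ : π.map Prod.fst = μ ∧ π.map Prod.snd = ν),
      ∫⁻ z, ENNReal.ofReal ((n : ℝ)⁻¹ * ∑ i, |z.1 i - z.2 i| ^ p) ∂π

/-- The empirical measure `(1/N)·∑ᵢ δ_{x i}`. -/
noncomputable def empMeas (N : ℕ) (x : Fin N → ℝ) : Measure ℝ :=
  (N : ℝ≥0∞)⁻¹ • ∑ i, Measure.dirac (x i)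

/-- `ε_{n,p}(μ) = E[W_p^p((1/n)∑ δ_{Zⁱ}, μ)]` for `Z¹,…,Zⁿ` i.i.d. with law `μ`. -/
noncomputable def epsNp (p : ℝ) (n : ℕ) (μ : Measure ℝ) : ℝ≥0∞ :=
  ∫⁻ z : Fin n → ℝ, WppR p (empMeas n z) μ ∂(Measure.pi fun _ : Fin n => μ)

lemma ofReal_abs_sub_rpow {p : ℝ} (hp : 0 ≤ p) (x y : ℝ) :
    ENNReal.ofReal (|x - y| ^ p) = edist x y ^ p := by
  rw [edist_dist, Real.dist_eq, ENNReal.ofReal_rpow_of_nonneg (abs_nonneg _) hp]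

open ProbabilityTheory in
theorem MeasureTheory.Measure.exists_glue {α β γ : Type*} [MeasurableSpace α] [MeasurableSpace β]
    [MeasurableSpace γ] [StandardBorelSpace α] [Nonempty α] [StandardBorelSpace γ] [Nonempty γ]
    (π₁ : Measure (α × β)) (π₂ : Measure (β × γ)) [IsFiniteMeasure π₁] [IsFiniteMeasure π₂]
    (h : π₁.snd = π₂.fst) :
    ∃ τ : Measure (β × α × γ),
      τ.map (Prod.map id Prod.fst) = π₁.map Prod.swap ∧ τ.map (Prod.map id Prod.snd) = π₂ := by
  -- Given the middle coordinate, draw the outer two independently from the two disintegrations.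
  refine ⟨π₂.fst ⊗ₘ ((π₁.map Prod.swap).condKernel ×ₖ π₂.condKernel), ?_, ?_⟩
  · rw [← Measure.compProd_map measurable_fst, ← Kernel.fst_eq, Kernel.fst_prod, ← h,
      ← Measure.fst_map_swap, Measure.disintegrate]
  · rw [← Measure.compProd_map measurable_snd, ← Kernel.snd_eq, Kernel.snd_prod,
      Measure.disintegrate]

lemma map_comp_perm_of_exchangeable {Ω ι κ E : Type*} [MeasurableSpace Ω] [MeasurableSpace E]
    {ℙ : Measure Ω} {Y : Ω → ι → E} (hY : Measurable Y)
    (hexch : ∀ σ : Equiv.Perm ι, ℙ.map (fun ω i => Y ω (σ i)) = ℙ.map Y)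
    (σ : Equiv.Perm ι) (f : κ → ι) :
    ℙ.map (fun ω j => Y ω (σ (f j))) = ℙ.map (fun ω j => Y ω (f j)) := by
  have hf : Measurable fun (x : ι → E) (j : κ) => x (f j) := by fun_prop
  have hσ : Measurable fun ω i => Y ω (σ i) := by fun_prop
  rw [show (fun ω j => Y ω (σ (f j))) = (fun (x : ι → E) j => x (f j)) ∘ (fun ω i => Y ω (σ i))
    from rfl, ← Measure.map_map hf hσ, hexch, Measure.map_map hf hY]
  rfl

section
variable {p : ℝ}

lemma WppR_le_lintegral {α β : Measure ℝ} (π : Measure (ℝ × ℝ)) (h₁ : π.map Prod.fst = α)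
    (h₂ : π.map Prod.snd = β) : WppR p α β ≤ ∫⁻ z, ENNReal.ofReal (|z.1 - z.2| ^ p) ∂π :=
  iInf₂_le π ⟨h₁, h₂⟩

lemma WppR_zero_zero : WppR p 0 0 = 0 :=
  le_antisymm ((WppR_le_lintegral 0 (by simp) (by simp)).trans_eq (by simp)) zero_le

lemma WppR_rpow_inv_le_of_glue (hp : 1 ≤ p) {α γ : Measure ℝ} {π₁ π₂ : Measure (ℝ × ℝ)}
    (h₁ : π₁.map Prod.fst = α) (h₂ : π₂.map Prod.snd = γ) {τ : Measure (ℝ × ℝ × ℝ)}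
    (hτ₁ : τ.map (Prod.map id Prod.fst) = π₁.map Prod.swap)
    (hτ₂ : τ.map (Prod.map id Prod.snd) = π₂) :
    WppR p α γ ^ p⁻¹ ≤ (∫⁻ z, ENNReal.ofReal (|z.1 - z.2| ^ p) ∂π₁) ^ p⁻¹
      + (∫⁻ z, ENNReal.ofReal (|z.1 - z.2| ^ p) ∂π₂) ^ p⁻¹ := by
  have hp₀ : 0 ≤ p := zero_le_one.trans hp
  have hfst : (τ.map Prod.snd).map Prod.fst = α := by
    calc (τ.map Prod.snd).map Prod.fst = (τ.map (Prod.map id Prod.fst)).map Prod.snd := by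
          rw [Measure.map_map measurable_fst measurable_snd,
            Measure.map_map measurable_snd (by fun_prop)]
          rfl
      _ = α := by rw [hτ₁, Measure.map_map measurable_snd measurable_swap]; exact h₁
  have hsnd : (τ.map Prod.snd).map Prod.snd = γ := by
    calc (τ.map Prod.snd).map Prod.snd = (τ.map (Prod.map id Prod.snd)).map Prod.snd := by
          rw [Measure.map_map measurable_snd measurable_snd,
            Measure.map_map measurable_snd (by fun_prop)]
          rfl
      _ = γ := by rw [hτ₂, h₂]
  have hcost₁ : ∫⁻ w, edist w.2.1 w.1 ^ p ∂τ = ∫⁻ z, edist z.1 z.2 ^ p ∂π₁ := by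
    have h := lintegral_map (f := fun x : ℝ × ℝ => edist x.2 x.1 ^ p) (by fun_prop)
      (show Measurable (Prod.map id Prod.fst : ℝ × ℝ × ℝ → ℝ × ℝ) by fun_prop) (μ := τ)
    rw [hτ₁, lintegral_map (by fun_prop) measurable_swap] at h
    exact h.symm
  have hcost₂ : ∫⁻ w, edist w.1 w.2.2 ^ p ∂τ = ∫⁻ z, edist z.1 z.2 ^ p ∂π₂ := by
    rw [← hτ₂, lintegral_map (by fun_prop) (by fun_prop)]
    rfl
  simp_rw [ofReal_abs_sub_rpow hp₀, ← hcost₁, ← hcost₂]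
  calc WppR p α γ ^ p⁻¹ ≤ (∫⁻ z, edist z.1 z.2 ^ p ∂(τ.map Prod.snd)) ^ p⁻¹ := by
        gcongr
        simpa only [ofReal_abs_sub_rpow hp₀] using WppR_le_lintegral (p := p) _ hfst hsnd
    _ = (∫⁻ w, edist w.2.1 w.2.2 ^ p ∂τ) ^ p⁻¹ := by
        rw [lintegral_map (by fun_prop) measurable_snd]
    _ ≤ (∫⁻ w, (edist w.2.1 w.1 + edist w.1 w.2.2) ^ p ∂τ) ^ p⁻¹ := by
        gcongr with w
        exact edist_triangle _ _ _
    _ ≤ _ := by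
        simpa only [one_div, Pi.add_apply] using
          ENNReal.lintegral_Lp_add_le (μ := τ) (f := fun w => edist w.2.1 w.1)
            (g := fun w => edist w.1 w.2.2) (by fun_prop) (by fun_prop) hp

lemma WppR_rpow_inv_le_of_couplings (hp : 1 ≤ p) {α β γ : Measure ℝ} [IsFiniteMeasure α]
    [IsFiniteMeasure β] {π₁ π₂ : Measure (ℝ × ℝ)} (h₁ : π₁.map Prod.fst = α)
    (h₁₂ : π₁.map Prod.snd = β) (h₂₁ : π₂.map Prod.fst = β) (h₂ : π₂.map Prod.snd = γ) :
    WppR p α γ ^ p⁻¹ ≤ (∫⁻ z, ENNReal.ofReal (|z.1 - z.2| ^ p) ∂π₁) ^ p⁻¹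
      + (∫⁻ z, ENNReal.ofReal (|z.1 - z.2| ^ p) ∂π₂) ^ p⁻¹ := by
  have : IsFiniteMeasure (π₁.map Prod.fst) := h₁ ▸ ‹_›
  have : IsFiniteMeasure π₁ := Measure.isFiniteMeasure_of_map measurable_fst.aemeasurable
  have : IsFiniteMeasure (π₂.map Prod.fst) := h₂₁ ▸ ‹_›
  have : IsFiniteMeasure π₂ := Measure.isFiniteMeasure_of_map measurable_fst.aemeasurable
  obtain ⟨τ, hτ₁, hτ₂⟩ := Measure.exists_glue π₁ π₂ (h₁₂.trans h₂₁.symm)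
  exact WppR_rpow_inv_le_of_glue hp h₁ h₂ hτ₁ hτ₂

lemma WppR_rpow_inv_le_add (hp : 1 ≤ p) (α β γ : Measure ℝ) [IsFiniteMeasure α]
    [IsFiniteMeasure β] : WppR p α γ ^ p⁻¹ ≤ WppR p α β ^ p⁻¹ + WppR p β γ ^ p⁻¹ := by
  have hq : 0 < p⁻¹ := inv_pos.2 (zero_lt_one.trans_le hp)
  conv_rhs => simp only [WppR, ← ENNReal.orderIsoRpow_apply _ hq, OrderIso.map_iInf,
    ENNReal.iInf_add, ENNReal.add_iInf]
  exact le_iInf₂ fun π₂ h₂ => le_iInf₂ fun π₁ h₁ =>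
    WppR_rpow_inv_le_of_couplings hp h₁.1 h₁.2 h₂.1 h₂.2

lemma WppR_le_two_rpow_mul_add (hp : 1 ≤ p) (α β γ : Measure ℝ) [IsFiniteMeasure α]
    [IsFiniteMeasure β] : WppR p α γ ≤ 2 ^ (p - 1) * (WppR p α β + WppR p β γ) := by
  have hp₀ : p ≠ 0 := (zero_lt_one.trans_le hp).ne'
  have hroot : ∀ x : ℝ≥0∞, (x ^ p⁻¹) ^ p = x := fun x => by
    rw [← ENNReal.rpow_mul, inv_mul_cancel₀ hp₀, ENNReal.rpow_one]
  calc WppR p α γ = (WppR p α γ ^ p⁻¹) ^ p := (hroot _).symm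
    _ ≤ (WppR p α β ^ p⁻¹ + WppR p β γ ^ p⁻¹) ^ p := by
        gcongr; exact WppR_rpow_inv_le_add hp α β γ
    _ ≤ 2 ^ (p - 1) * ((WppR p α β ^ p⁻¹) ^ p + (WppR p β γ ^ p⁻¹) ^ p) :=
        ENNReal.rpow_add_le_mul_rpow_add_rpow _ _ hp
    _ = 2 ^ (p - 1) * (WppR p α β + WppR p β γ) := by rw [hroot, hroot]

lemma WppR_add_le (ν₁ ν₂ μ₁ μ₂ : Measure ℝ) :
    WppR p (ν₁ + ν₂) (μ₁ + μ₂) ≤ WppR p ν₁ μ₁ + WppR p ν₂ μ₂ := by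
  simp only [WppR, ENNReal.iInf_add, ENNReal.add_iInf]
  refine le_iInf₂ fun π₂ h₂ => le_iInf₂ fun π₁ h₁ => ?_
  exact (WppR_le_lintegral (π₁ + π₂) (by rw [Measure.map_add _ _ measurable_fst, h₁.1, h₂.1])
    (by rw [Measure.map_add _ _ measurable_snd, h₁.2, h₂.2])).trans_eq
    (lintegral_add_measure _ _ _)

lemma WppR_sum_le {ι : Type*} (s : Finset ι) (ν μ : ι → Measure ℝ) :
    WppR p (∑ i ∈ s, ν i) (∑ i ∈ s, μ i) ≤ ∑ i ∈ s, WppR p (ν i) (μ i) := by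
  classical
  induction s using Finset.induction_on with
  | empty => simp [WppR_zero_zero]
  | insert i s hi ih =>
    simp only [Finset.sum_insert hi]
    exact (WppR_add_le _ _ _ _).trans (by gcongr)

lemma WppR_smul_le {c : ℝ≥0∞} (hc : c ≠ ∞) (ν μ : Measure ℝ) :
    WppR p (c • ν) (c • μ) ≤ c * WppR p ν μ := by
  rcases eq_or_ne c 0 with rfl | hc₀
  · simp [WppR_zero_zero]
  simp only [WppR, ENNReal.mul_iInf_of_ne hc₀ hc]
  refine le_iInf₂ fun π h => ?_
  exact (WppR_le_lintegral (c • π) (by rw [Measure.map_smul, h.1])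
    (by rw [Measure.map_smul, h.2])).trans_eq (by rw [lintegral_smul_measure, smul_eq_mul])

lemma WppR_average_le {ι : Type*} [Fintype ι] [Nonempty ι] (ν : ι → Measure ℝ) (μ : Measure ℝ) :
    WppR p ((Fintype.card ι : ℝ≥0∞)⁻¹ • ∑ i, ν i) μ
      ≤ (Fintype.card ι : ℝ≥0∞)⁻¹ * ∑ i, WppR p (ν i) μ := by
  have hμ : (Fintype.card ι : ℝ≥0∞)⁻¹ • ∑ _i : ι, μ = μ := by
    rw [Finset.sum_const, Finset.card_univ, ← Nat.cast_smul_eq_nsmul ℝ≥0∞, smul_smul,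
      ENNReal.inv_mul_cancel (by simp) (by simp), one_smul]
  calc WppR p ((Fintype.card ι : ℝ≥0∞)⁻¹ • ∑ i, ν i) μ
      = WppR p ((Fintype.card ι : ℝ≥0∞)⁻¹ • ∑ i, ν i)
          ((Fintype.card ι : ℝ≥0∞)⁻¹ • ∑ _i : ι, μ) := by rw [hμ]
    _ ≤ (Fintype.card ι : ℝ≥0∞)⁻¹ * ∑ i, WppR p (ν i) μ := by
        grw [WppR_smul_le (by simp), WppR_sum_le]

instance isFiniteMeasure_empMeas (n : ℕ) (x : Fin n → ℝ) : IsFiniteMeasure (empMeas n x) := by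
  constructor
  rcases eq_or_ne n 0 with rfl | hn
  · simp [empMeas]
  · simp [empMeas, ENNReal.inv_mul_cancel, hn]

lemma empMeas_eq_smul_sum_empMeas {k n m : ℕ} (e : Fin k × Fin n ≃ Fin m) (x : Fin m → ℝ) :
    empMeas m x = (k : ℝ≥0∞)⁻¹ • ∑ b, empMeas n fun i => x (e (b, i)) := by
  have hm : (m : ℝ≥0∞) = k * n := by exact_mod_cast (by simpa using (Fintype.card_congr e).symm)
  simp only [empMeas, Finset.smul_sum, smul_smul]
  rw [← e.sum_comp, Fintype.sum_prod_type, hm, ENNReal.mul_inv (by simp) (by simp)]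

lemma WppR_empMeas_le {n : ℕ} (y z : Fin n → ℝ) :
    WppR p (empMeas n y) (empMeas n z) ≤ ENNReal.ofReal ((n : ℝ)⁻¹ * ∑ i, |y i - z i| ^ p) := by
  rcases eq_or_ne n 0 with rfl | hn
  · simp [empMeas, WppR_zero_zero]
  have hmap : ∀ f : ℝ × ℝ → ℝ, Measurable f →
      ((n : ℝ≥0∞)⁻¹ • ∑ i, Measure.dirac (y i, z i)).map f
        = (n : ℝ≥0∞)⁻¹ • ∑ i, Measure.dirac (f (y i, z i)) := fun f hf => by
    rw [Measure.map_smul, Measure.map_finset_sum hf.aemeasurable]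
    simp_rw [Measure.map_dirac' hf]
  refine (WppR_le_lintegral _ (hmap _ measurable_fst) (hmap _ measurable_snd)).trans_eq ?_
  rw [lintegral_smul_measure, lintegral_finsetSum_measure, smul_eq_mul, ENNReal.ofReal_mul
    (by positivity), ENNReal.ofReal_sum_of_nonneg fun i _ => by positivity,
    ENNReal.ofReal_inv_of_pos (by positivity), ENNReal.ofReal_natCast]
  simp_rw [lintegral_dirac' _
    (by fun_prop : Measurable fun z : ℝ × ℝ => ENNReal.ofReal (|z.1 - z.2| ^ p))]

lemma inv_mul_sum_abs_sub_rpow_le_dist (hp : 0 ≤ p) {n : ℕ} (y z : Fin n → ℝ) :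
    (n : ℝ)⁻¹ * ∑ i, |y i - z i| ^ p ≤ dist y z ^ p := by
  calc (n : ℝ)⁻¹ * ∑ i, |y i - z i| ^ p ≤ (n : ℝ)⁻¹ * ∑ _i : Fin n, dist y z ^ p := by
        gcongr with i
        rw [← Real.dist_eq]
        exact dist_le_pi_dist y z i
    _ = ((n : ℝ)⁻¹ * n) * dist y z ^ p := by simp [mul_assoc]
    _ ≤ dist y z ^ p :=
        mul_le_of_le_one_left (by positivity) (inv_mul_le_one_of_le₀ le_rfl (by positivity))

lemma WppR_empMeas_le_edist_rpow (hp : 0 ≤ p) {n : ℕ} (y z : Fin n → ℝ) :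
    WppR p (empMeas n y) (empMeas n z) ≤ edist y z ^ p := by
  grw [WppR_empMeas_le, inv_mul_sum_abs_sub_rpow_le_dist hp, edist_dist,
    ENNReal.ofReal_rpow_of_nonneg dist_nonneg hp]

lemma continuous_WppR_empMeas_rpow_inv (hp : 1 ≤ p) (n : ℕ) (μ : Measure ℝ) :
    Continuous fun z : Fin n → ℝ => WppR p (empMeas n z) μ ^ p⁻¹ := by
  have hp₀ : 0 < p := zero_lt_one.trans_le hp
  refine continuous_of_le_add_edist 1 ENNReal.one_ne_top fun y z => ?_
  calc WppR p (empMeas n y) μ ^ p⁻¹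
      ≤ WppR p (empMeas n y) (empMeas n z) ^ p⁻¹ + WppR p (empMeas n z) μ ^ p⁻¹ :=
        WppR_rpow_inv_le_add hp _ _ _
    _ ≤ (edist y z ^ p) ^ p⁻¹ + WppR p (empMeas n z) μ ^ p⁻¹ := by
        gcongr; exact WppR_empMeas_le_edist_rpow hp₀.le y z
    _ = WppR p (empMeas n z) μ ^ p⁻¹ + 1 * edist y z := by
        rw [← ENNReal.rpow_mul, mul_inv_cancel₀ hp₀.ne', ENNReal.rpow_one, one_mul, add_comm]

lemma measurable_WppR_empMeas (hp : 1 ≤ p) (n : ℕ) (μ : Measure ℝ) :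
    Measurable fun z : Fin n → ℝ => WppR p (empMeas n z) μ := by
  have hp₀ : p ≠ 0 := (zero_lt_one.trans_le hp).ne'
  have h := (continuous_WppR_empMeas_rpow_inv hp n μ).measurable.pow_const p
  simpa only [← ENNReal.rpow_mul, inv_mul_cancel₀ hp₀, ENNReal.rpow_one] using h

lemma WppR_empMeas_le_two_rpow_mul (hp : 1 ≤ p) {n : ℕ} (μ : Measure ℝ) (y z : Fin n → ℝ) :
    WppR p (empMeas n y) μ ≤ 2 ^ (p - 1) *
      (ENNReal.ofReal ((n : ℝ)⁻¹ * ∑ i, |y i - z i| ^ p) + WppR p (empMeas n z) μ) := by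
  grw [WppR_le_two_rpow_mul_add hp _ (empMeas n z) μ, WppR_empMeas_le]

lemma lintegral_WppR_empMeas_le_of_exchangeable (hp : 1 ≤ p) {Ω : Type*} [MeasurableSpace Ω]
    {ℙ : Measure Ω} {k n m : ℕ} {Y : Ω → Fin m → ℝ} (hY : Measurable Y)
    (hexch : ∀ σ : Equiv.Perm (Fin m), ℙ.map (fun ω i => Y ω (σ i)) = ℙ.map Y)
    (e : Fin k × Fin n ≃ Fin m) (b₀ : Fin k) (μ : Measure ℝ) :
    ∫⁻ ω, WppR p (empMeas m (Y ω)) μ ∂ℙ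
      ≤ ∫⁻ z, WppR p (empMeas n z) μ ∂(ℙ.map fun ω i => Y ω (e (b₀, i))) := by
  have : Nonempty (Fin k) := ⟨b₀⟩
  have hk : (k : ℝ≥0∞) ≠ 0 := Nat.cast_ne_zero.2 (Fin.pos b₀).ne'
  have hg := measurable_WppR_empMeas hp n μ
  have hblock : ∀ b : Fin k, Measurable fun ω i => Y ω (e (b, i)) := fun b => by fun_prop
  have hlaw : ∀ b : Fin k,
      ℙ.map (fun ω i => Y ω (e (b, i))) = ℙ.map (fun ω i => Y ω (e (b₀, i))) := fun b => by
    simpa using map_comp_perm_of_exchangeable hY hexch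
      (e.permCongr ((Equiv.swap b₀ b).prodCongr (Equiv.refl _))) (fun i => e (b₀, i))
  calc ∫⁻ ω, WppR p (empMeas m (Y ω)) μ ∂ℙ
      ≤ ∫⁻ ω, (k : ℝ≥0∞)⁻¹ * ∑ b, WppR p (empMeas n fun i => Y ω (e (b, i))) μ ∂ℙ := by
        refine lintegral_mono fun ω => ?_
        rw [empMeas_eq_smul_sum_empMeas e]
        simpa using WppR_average_le (fun b => empMeas n fun i => Y ω (e (b, i))) μ
    _ = (k : ℝ≥0∞)⁻¹ * ∑ b : Fin k, ∫⁻ z, WppR p (empMeas n z) μ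
          ∂(ℙ.map fun ω i => Y ω (e (b, i))) := by
        rw [lintegral_const_mul' _ _ (ENNReal.inv_ne_top.2 hk),
          lintegral_finsetSum _ fun b _ => by exact hg.comp (hblock b)]
        simp_rw [lintegral_map hg (hblock _)]
    _ = ∫⁻ z, WppR p (empMeas n z) μ ∂(ℙ.map fun ω i => Y ω (e (b₀, i))) := by
        simp_rw [hlaw, Finset.sum_const, Finset.card_univ, Fintype.card_fin, nsmul_eq_mul,
          ← mul_assoc, ENNReal.inv_mul_cancel hk (ENNReal.natCast_ne_top k), one_mul]

lemma lintegral_WppR_empMeas_le_WppVec (hp : 1 ≤ p) {n : ℕ} (μ : Measure ℝ)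
    (ν : Measure (Fin n → ℝ)) :
    ∫⁻ z, WppR p (empMeas n z) μ ∂ν
      ≤ 2 ^ (p - 1) * (WppVec p n ν (Measure.pi fun _ => μ) + epsNp p n μ) := by
  have hg := measurable_WppR_empMeas hp n μ
  have hcost : Measurable fun w : (Fin n → ℝ) × (Fin n → ℝ) =>
      ENNReal.ofReal ((n : ℝ)⁻¹ * ∑ i, |w.1 i - w.2 i| ^ p) := by fun_prop
  have hc₀ : (2 : ℝ≥0∞) ^ (p - 1) ≠ 0 := (ENNReal.rpow_pos two_pos ENNReal.ofNat_ne_top).ne'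
  have hc : (2 : ℝ≥0∞) ^ (p - 1) ≠ ∞ :=
    ENNReal.rpow_ne_top_of_nonneg (sub_nonneg.2 hp) ENNReal.ofNat_ne_top
  simp only [WppVec, ENNReal.iInf_add, ENNReal.mul_iInf_of_ne hc₀ hc]
  refine le_iInf₂ fun π hπ => ?_
  calc ∫⁻ z, WppR p (empMeas n z) μ ∂ν = ∫⁻ w, WppR p (empMeas n w.1) μ ∂π := by
        rw [← hπ.1, lintegral_map hg measurable_fst]
    _ ≤ ∫⁻ w, 2 ^ (p - 1) * (ENNReal.ofReal ((n : ℝ)⁻¹ * ∑ i, |w.1 i - w.2 i| ^ p)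
          + WppR p (empMeas n w.2) μ) ∂π :=
        lintegral_mono fun w => WppR_empMeas_le_two_rpow_mul hp μ w.1 w.2
    _ = _ := by
        rw [lintegral_const_mul' _ _ hc, lintegral_add_left hcost, epsNp, ← hπ.2,
          lintegral_map hg measurable_snd]

end

theorem stmt9_general {Ω : Type*} [MeasurableSpace Ω] (ℙ : Measure Ω)
    (k n m : ℕ) (hk : 0 < k) (hm : m = k * n) (hnm : n ≤ m)
    (Y : Ω → Fin m → ℝ) (hY : Measurable Y)
    (hexch : ∀ σ : Equiv.Perm (Fin m),
      Measure.map (fun ω => fun i : Fin m => Y ω (σ i)) ℙ = Measure.map Y ℙ)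
    (p : ℝ) (hp : 1 ≤ p)
    (μ : Measure ℝ) :
    (ENNReal.ofReal ((2 : ℝ) ^ (p - 1)))⁻¹ * ∫⁻ ω, WppR p (empMeas m (Y ω)) μ ∂ℙ
      ≤ WppVec p n
          (Measure.map (fun ω => fun i : Fin n => Y ω (Fin.castLE hnm i)) ℙ)
          (Measure.pi fun _ : Fin n => μ)
        + epsNp p n μ := by
  let e : Fin k × Fin n ≃ Fin m := finProdFinEquiv.trans (finCongr hm.symm)
  have he : ∀ i, e (⟨0, hk⟩, i) = Fin.castLE hnm i := fun i => by ext; simp [e]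
  have hblock := lintegral_WppR_empMeas_le_of_exchangeable hp hY hexch e ⟨0, hk⟩ μ
  simp only [he] at hblock
  rw [← ENNReal.ofReal_rpow_of_pos two_pos, ENNReal.ofReal_ofNat,
    ENNReal.inv_mul_le_iff (ENNReal.rpow_pos two_pos ENNReal.ofNat_ne_top).ne'
      (ENNReal.rpow_ne_top_of_nonneg (sub_nonneg.2 hp) ENNReal.ofNat_ne_top)]
  exact hblock.trans (lintegral_WppR_empMeas_le_WppVec hp μ _)

/-- Lemma 6 of the paper, case `ℓ = 0` (`m = k·n`). For an exchangeable
vector `Y ∈ ℝᵐ` and `μ ∈ P(ℝ)` with finite `p`-th moments,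
`(1/2^{p-1})·E[W_p^p(μ̂_Y, μ)] ≤ W_p^p(Law(Y¹,…,Yⁿ), μ^{⊗n}) + ε_{n,p}(μ)`. -/
theorem stmt9 {Ω : Type*} [MeasurableSpace Ω] (ℙ : Measure Ω) [IsProbabilityMeasure ℙ]
    (k n m : ℕ) (hk : 0 < k) (hn : 0 < n) (hm : m = k * n) (hnm : n ≤ m)
    (Y : Ω → Fin m → ℝ) (hY : Measurable Y)
    (hexch : ∀ σ : Equiv.Perm (Fin m),
      Measure.map (fun ω => fun i : Fin m => Y ω (σ i)) ℙ = Measure.map Y ℙ)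
    (p : ℝ) (hp : 1 ≤ p)
    (hYmom : ∀ i, Integrable (fun ω => |Y ω i| ^ p) ℙ)
    (μ : Measure ℝ) [IsProbabilityMeasure μ]
    (hμ : Integrable (fun u => |u| ^ p) μ) :
    (ENNReal.ofReal ((2 : ℝ) ^ (p - 1)))⁻¹ * ∫⁻ ω, WppR p (empMeas m (Y ω)) μ ∂ℙ
      ≤ WppVec p n
          (Measure.map (fun ω => fun i : Fin n => Y ω (Fin.castLE hnm i)) ℙ)
          (Measure.pi fun _ : Fin n => μ)
        + epsNp p n μ :=
  stmt9_general ℙ k n m hk hm hnm Y hY hexch p hp μ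
end

section
/- Let h : [0,∞) → [0,∞) be absolutely continuous with h(0) = 0, and suppose that for a.e. t, h'(t) ≤ −a·h(t) + 2b·√(h(t))·√(g(t)) + b·g(t), where a ≥ 0, b > 0, and g : [0,∞) → [0,∞) is continuous. Then h(t) ≤ b·e^{−a t}·(2 + 8 b t)·∫₀ᵗ e^{a s} g(s) ds for all t ≥ 0. -/
/-!
Fix `T > 0`. AM–GM with weight `1/(2T)` linearises the differential inequality to
`h' + a h ≤ h/(2T) + (b + 2Tb²) g`. Integrating against the factor `e^{as}` (integration by parts
for absolutely continuous functions) gives, for `φ(t) = e^{at} h(t)` on `[0, T]`,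
`φ(t) ≤ (1/(2T)) ∫₀ᵗ φ + (b + 2Tb²) ∫₀ᵀ e^{as} g`. At a maximum point of `φ` on `[0, T]` the
integral term is at most half the maximum, so `φ(T) ≤ 2(b + 2Tb²) ∫₀ᵀ e^{as} g`.
-/

open MeasureTheory Set Real

theorem exp_mul_integral_eq_integral (a : ℝ) {f : ℝ → ℝ} {t : ℝ}
    (hf : IntervalIntegrable f volume 0 t) :
    exp (a * t) * ∫ s in 0..t, f s =
      ∫ s in 0..t, exp (a * s) * (f s + a * ∫ u in 0..s, f u) := by
  have hF : AbsolutelyContinuousOnInterval (fun x => ∫ u in 0..x, f u) 0 t :=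
    hf.absolutelyContinuousOnInterval_intervalIntegral left_mem_uIcc
  have hE : AbsolutelyContinuousOnInterval (fun x => exp (a * x)) 0 t :=
    ContDiffOn.absolutelyContinuousOnInterval (by fun_prop)
  have hprod := hE.integral_deriv_mul_eq_sub hF
  rw [intervalIntegral.integral_same, mul_zero, sub_zero] at hprod
  rw [← hprod]
  refine intervalIntegral.integral_congr_ae ?_
  filter_upwards [hf.ae_hasDerivAt_integral] with s hs hs'
  rw [(hs (uIoc_subset_uIcc hs') 0 left_mem_uIcc).deriv,
    (((hasDerivAt_id' s).const_mul a).exp).deriv]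
  ring

theorem exp_mul_le_integral_of_ae_le {h h' ψ : ℝ → ℝ} {a t : ℝ} (ht : 0 ≤ t)
    (hh' : IntervalIntegrable h' volume 0 t) (hh : ∀ s ∈ Icc 0 t, h s = ∫ u in 0..s, h' u)
    (hψ : IntervalIntegrable (fun s => exp (a * s) * ψ s) volume 0 t)
    (hle : ∀ᵐ s, s ∈ Icc 0 t → h' s + a * h s ≤ ψ s) :
    exp (a * t) * h t ≤ ∫ s in 0..t, exp (a * s) * ψ s := by
  rw [hh t (right_mem_Icc.mpr ht), exp_mul_integral_eq_integral a hh']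
  have hprim : ContinuousOn (fun s => ∫ u in 0..s, h' u) (uIcc 0 t) :=
    intervalIntegral.continuousOn_primitive_interval' hh' left_mem_uIcc
  have hint : IntervalIntegrable
      (fun s => exp (a * s) * (h' s + a * ∫ u in 0..s, h' u)) volume 0 t := by
    simp_rw [mul_add]
    exact (hh'.continuousOn_mul (by fun_prop)).add
      (ContinuousOn.intervalIntegrable (by fun_prop))
  refine intervalIntegral.integral_mono_ae_restrict ht hint hψ ?_
  filter_upwards [(ae_restrict_iff' measurableSet_Icc).mpr hle, ae_restrict_mem measurableSet_Icc]
    with s hs hs'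
  rw [← hh s hs']
  exact mul_le_mul_of_nonneg_left hs (exp_pos _).le

theorem two_mul_mul_sqrt_mul_sqrt_le (b : ℝ) {x y ε : ℝ} (hx : 0 ≤ x) (hy : 0 ≤ y)
    (hε : 0 < ε) : 2 * b * √x * √y ≤ ε * x + b ^ 2 / ε * y := by
  have hsq := sq_nonneg (ε * √x - b * √y)
  rw [sub_sq, mul_pow, mul_pow, sq_sqrt hx, sq_sqrt hy] at hsq
  refine le_of_mul_le_mul_left ?_ hε
  rw [mul_add, ← mul_assoc ε (b ^ 2 / ε), mul_div_cancel₀ _ hε.ne']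
  nlinarith

theorem continuousOn_Icc_of_eq_integral {h h' : ℝ → ℝ} {T : ℝ} (hT : 0 ≤ T)
    (hh' : IntervalIntegrable h' volume 0 T) (hh : ∀ s ∈ Icc 0 T, h s = ∫ u in 0..s, h' u) :
    ContinuousOn h (Icc 0 T) := by
  rw [← uIcc_of_le hT]
  exact (intervalIntegral.continuousOn_primitive_interval' hh' left_mem_uIcc).congr
    fun s hs => hh s (uIcc_of_le hT ▸ hs)

theorem le_two_mul_of_le_mul_integral_add {φ : ℝ → ℝ} {κ B T : ℝ}
    (hφ : ContinuousOn φ (Icc 0 T)) (hφ0 : ∀ t ∈ Icc 0 T, 0 ≤ φ t) (hκ : 0 ≤ κ)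
    (hκT : κ * T ≤ 1 / 2) (hle : ∀ t ∈ Icc 0 T, φ t ≤ κ * (∫ s in 0..t, φ s) + B) :
    ∀ t ∈ Icc 0 T, φ t ≤ 2 * B := by
  intro t ht
  obtain ⟨t₀, ht₀, hmax⟩ := isCompact_Icc.exists_isMaxOn ⟨t, ht⟩ hφ
  have hφt₀ := hφ0 t₀ ht₀
  have hint : ∫ s in 0..t₀, φ s ≤ t₀ * φ t₀ := by
    simpa using intervalIntegral.integral_mono_on ht₀.1
      ((hφ.mono (Icc_subset_Icc_right ht₀.2)).intervalIntegrable_of_Icc ht₀.1)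
      (intervalIntegrable_const (μ := volume)) fun s hs => hmax ⟨hs.1, hs.2.trans ht₀.2⟩
  have hhalf : κ * (t₀ * φ t₀) ≤ φ t₀ / 2 := by
    have : κ * t₀ ≤ 1 / 2 := (mul_le_mul_of_nonneg_left ht₀.2 hκ).trans hκT
    nlinarith
  have hφt : φ t ≤ φ t₀ := hmax ht
  linarith [hle t₀ ht₀, mul_le_mul_of_nonneg_left hint hκ]

theorem exp_mul_le_two_mul_integral_of_ae_le {h h' g : ℝ → ℝ} {a κ c T : ℝ} (hT : 0 ≤ T)
    (hκ : 0 ≤ κ) (hκT : κ * T ≤ 1 / 2) (hc : 0 ≤ c)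
    (hh' : IntervalIntegrable h' volume 0 T) (hh : ∀ s ∈ Icc 0 T, h s = ∫ u in 0..s, h' u)
    (hh0 : ∀ s ∈ Icc 0 T, 0 ≤ h s) (hg : ContinuousOn g (Icc 0 T))
    (hg0 : ∀ s ∈ Icc 0 T, 0 ≤ g s)
    (hle : ∀ᵐ s, s ∈ Icc 0 T → h' s + a * h s ≤ κ * h s + c * g s) :
    exp (a * T) * h T ≤ 2 * (c * ∫ s in 0..T, exp (a * s) * g s) := by
  have hhc := continuousOn_Icc_of_eq_integral hT hh' hh
  have hEh : ContinuousOn (fun s => exp (a * s) * h s) (Icc 0 T) := by fun_prop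
  have hEg : ContinuousOn (fun s => exp (a * s) * g s) (Icc 0 T) := by fun_prop
  have hEg_int : ∀ t ∈ Icc 0 T, IntervalIntegrable (fun s => exp (a * s) * g s) volume 0 t :=
    fun t ht => (hEg.mono (Icc_subset_Icc_right ht.2)).intervalIntegrable_of_Icc ht.1
  have hEh_int : ∀ t ∈ Icc 0 T, IntervalIntegrable (fun s => exp (a * s) * h s) volume 0 t :=
    fun t ht => (hEh.mono (Icc_subset_Icc_right ht.2)).intervalIntegrable_of_Icc ht.1
  have hI : ∀ t ∈ Icc 0 T,
      ∫ s in 0..t, exp (a * s) * g s ≤ ∫ s in 0..T, exp (a * s) * g s := fun t ht =>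
    intervalIntegral.integral_mono_interval le_rfl ht.1 ht.2
      ((ae_restrict_iff' measurableSet_Ioc).mpr <| ae_of_all _ fun s hs =>
        mul_nonneg (exp_pos _).le (hg0 s (Ioc_subset_Icc_self hs)))
      (hEg_int T (right_mem_Icc.mpr hT))
  refine le_two_mul_of_le_mul_integral_add hEh
    (fun s hs => mul_nonneg (exp_pos _).le (hh0 s hs)) hκ hκT (fun t ht => ?_) T
    (right_mem_Icc.mpr hT)
  calc exp (a * t) * h t
      ≤ ∫ s in 0..t, exp (a * s) * (κ * h s + c * g s) := by
        refine exp_mul_le_integral_of_ae_le ht.1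
          (hh'.mono_set (uIcc_subset_uIcc_left (uIcc_of_le hT ▸ ht)))
          (fun s hs => hh s ⟨hs.1, hs.2.trans ht.2⟩) ?_ ?_
        · simp_rw [mul_add, mul_left_comm (exp _)]
          exact ((hEh_int t ht).const_mul _).add ((hEg_int t ht).const_mul _)
        · filter_upwards [hle] with s hs hst
          exact hs ⟨hst.1, hst.2.trans ht.2⟩
    _ = κ * (∫ s in 0..t, exp (a * s) * h s) + c * ∫ s in 0..t, exp (a * s) * g s := by
        simp_rw [mul_add, mul_left_comm (exp _)]
        rw [intervalIntegral.integral_add ((hEh_int t ht).const_mul _)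
          ((hEg_int t ht).const_mul _), intervalIntegral.integral_const_mul,
          intervalIntegral.integral_const_mul]
    _ ≤ _ := by gcongr; exact hI t ht

theorem stmt12_general (h h' g : ℝ → ℝ) (a b : ℝ) (hb : 0 < b)
    (hgc : ContinuousOn g (Set.Ici (0 : ℝ))) (hgnn : ∀ t, 0 ≤ t → 0 ≤ g t)
    (hh0 : h 0 = 0) (hhnn : ∀ t, 0 ≤ t → 0 ≤ h t)
    (hint : ∀ t, 0 ≤ t → IntervalIntegrable h' volume 0 t)
    (hFTC : ∀ t, 0 ≤ t → h t = ∫ s in (0 : ℝ)..t, h' s)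
    (hineq : ∀ᵐ t ∂(volume.restrict (Set.Ici (0 : ℝ))),
      h' t ≤ -a * h t + 2 * b * Real.sqrt (h t) * Real.sqrt (g t) + b * g t) :
    ∀ t, 0 ≤ t →
      h t ≤ b * Real.exp (-a * t) * (2 + 8 * b * t) *
        ∫ s in (0 : ℝ)..t, Real.exp (a * s) * g s := by
  intro T hT
  rcases hT.eq_or_lt with rfl | hT
  · simp [hh0]
  have hlinear : ∀ᵐ s, s ∈ Icc 0 T →
      h' s + a * h s ≤ (2 * T)⁻¹ * h s + (b + 2 * T * b ^ 2) * g s := by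
    filter_upwards [(ae_restrict_iff' measurableSet_Ici).mp hineq] with s hs hsT
    have hamgm := two_mul_mul_sqrt_mul_sqrt_le b (hhnn s hsT.1) (hgnn s hsT.1)
      (by positivity : 0 < (2 * T)⁻¹)
    rw [div_inv_eq_mul] at hamgm
    linarith [hs hsT.1]
  have hbound := exp_mul_le_two_mul_integral_of_ae_le hT.le (by positivity)
    (by field_simp; norm_num) (by positivity) (hint T hT.le) (fun s hs => hFTC s hs.1)
    (fun s hs => hhnn s hs.1) (hgc.mono Icc_subset_Ici_self) (fun s hs => hgnn s hs.1) hlinear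
  have hI0 : 0 ≤ ∫ s in 0..T, exp (a * s) * g s :=
    intervalIntegral.integral_nonneg hT.le fun s hs => mul_nonneg (exp_pos _).le (hgnn s hs.1)
  calc h T = exp (-a * T) * (exp (a * T) * h T) := by
        rw [← mul_assoc, ← exp_add]; simp
    _ ≤ exp (-a * T) * (2 * ((b + 2 * T * b ^ 2) * ∫ s in 0..T, exp (a * s) * g s)) := by
        gcongr
    _ ≤ b * exp (-a * T) * (2 + 8 * b * T) * ∫ s in 0..T, exp (a * s) * g s := by
        have : 2 * (b + 2 * T * b ^ 2) ≤ b * (2 + 8 * b * T) := by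
          nlinarith [mul_nonneg hT.le (sq_nonneg b)]
        nlinarith [mul_nonneg (exp_pos (-a * T)).le hI0]

/-- If `h : [0,∞) → [0,∞)` is absolutely continuous with `h(0) = 0`
(encoded via its a.e. derivative `h'`) and for a.e. `t ≥ 0`,
`h'(t) ≤ -a·h(t) + 2b·√(h(t))·√(g(t)) + b·g(t)` with `a ≥ 0`, `b > 0` and
`g : [0,∞) → [0,∞)` continuous, then
`h(t) ≤ b·e^{-at}·(2 + 8bt)·∫₀ᵗ e^{as} g(s) ds` for all `t ≥ 0`. -/
theorem stmt12 (h h' g : ℝ → ℝ) (a b : ℝ) (ha : 0 ≤ a) (hb : 0 < b)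
    (hgc : ContinuousOn g (Set.Ici (0 : ℝ))) (hgnn : ∀ t, 0 ≤ t → 0 ≤ g t)
    (hh0 : h 0 = 0) (hhnn : ∀ t, 0 ≤ t → 0 ≤ h t)
    (hint : ∀ t, 0 ≤ t → IntervalIntegrable h' volume 0 t)
    (hFTC : ∀ t, 0 ≤ t → h t = ∫ s in (0 : ℝ)..t, h' s)
    (hineq : ∀ᵐ t ∂(volume.restrict (Set.Ici (0 : ℝ))),
      h' t ≤ -a * h t + 2 * b * Real.sqrt (h t) * Real.sqrt (g t) + b * g t) :
    ∀ t, 0 ≤ t →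
      h t ≤ b * Real.exp (-a * t) * (2 + 8 * b * t) *
        ∫ s in (0 : ℝ)..t, Real.exp (a * s) * g s :=
  stmt12_general h h' g a b hb hgc hgnn hh0 hhnn hint hFTC hineq
end
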